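/- (The set of feasible chambers depends only on the Kähler chamber of the parameter.) Let W ⊆ ℝ^E be a linear subspace. If h₀ and h₁ belong to the same connected component of the set { h ∈ ℝ^E : ⟨h, γ⟩ ≠ 0 for every circuit γ of W } (the complement of the root hyperplanes γᗮ), then for every sign vector α : E → {+1,−1}, α is h₀-feasible if and only if α is h₁-feasible. -/

import Mathlib

/-- The standard inner product on `ℝ^E`. -/
noncomputable def dot {E : Type*} [Fintype E] (x y : E → ℝ) : ℝ := ∑ e, x e * y e

/-- The orthogonal complement of a subspace `W ⊆ ℝ^E` with respect to the
standard inner product. -/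
def perp {E : Type*} [Fintype E] (W : Submodule ℝ (E → ℝ)) : Set (E → ℝ) :=
  {u | ∀ w ∈ W, dot w u = 0}

/-- A sign vector `α` is `h`-feasible if there exists `v ∈ ℝ^E` with `v - h ∈ Wᗮ`
and `α e * v e ≥ 0` for all `e`. -/
def IsFeasible {E : Type*} [Fintype E] (W : Submodule ℝ (E → ℝ)) (h α : E → ℝ) : Prop :=
  ∃ v : E → ℝ, v - h ∈ perp W ∧ ∀ e, 0 ≤ α e * v e

/-- A circuit of a subset `U ⊆ ℝ^E` is a nonzero element of `U` whose support is
minimal under inclusion among supports of nonzero elements of `U`. -/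
def IsCircuit {E : Type*} [Fintype E] (U : Set (E → ℝ)) (u : E → ℝ) : Prop :=
  u ∈ U ∧ u ≠ 0 ∧
    ∀ w ∈ U, w ≠ 0 → {e | w e ≠ 0} ⊆ {e | u e ≠ 0} → {e | w e ≠ 0} = {e | u e ≠ 0}


/-!
For a generic parameter `h` (off every root hyperplane), `α` is `h`-feasible exactly when
`⟨h, γ⟩ > 0` for every circuit `γ` of `W` lying in the closed orthant of `α`. Necessity is a
one-line computation. For sufficiency, if `h + Wᗮ` misses the orthant, separating it from the
open orthant produces a nonzero `w ∈ W` in the orthant with `⟨h, w⟩ ≤ 0`; an element of this kind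
with support of minimal size is a circuit, since otherwise it splits as a positive combination of
two such elements of smaller support. The criterion only involves the signs of the finitely many
functions `h ↦ ⟨h, γ⟩`, which by the intermediate value theorem are constant on each connected
component of the complement of the root hyperplanes.
-/

open Function Matrix

theorem le_of_forall_pos_mul_add_lt {a b u : ℝ} (h : ∀ c : ℝ, 0 < c → c * a + b < u) :
    b ≤ u := by
  by_contra! hub
  have ha : a < 0 := by linarith [h 1 one_pos]
  have := h ((b - u) / -a) (div_pos (by linarith) (by linarith))
  rw [div_mul_eq_mul_div, mul_div_assoc, div_neg, div_self ha.ne] at this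
  linarith

theorem nonpos_of_forall_pos_mul_add_lt {a b u : ℝ} (h : ∀ c : ℝ, 0 < c → c * a + b < u) :
    a ≤ 0 := by
  have hbu := le_of_forall_pos_mul_add_lt h
  by_contra! ha
  have := h ((u - b + 1) / a) (by positivity)
  rw [div_mul_cancel₀ _ ha.ne'] at this
  linarith

theorem eq_zero_of_forall_le_add_mul {a b u : ℝ} (h : ∀ c : ℝ, u ≤ b + c * a) : a = 0 := by
  by_contra ha
  have := h ((u - b - 1) / a)
  rw [div_mul_cancel₀ _ ha] at this
  linarith

theorem IsPreconnected.pos_iff_of_ne_zero {X : Type*} [TopologicalSpace X] {T : Set X}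
    (hT : IsPreconnected T) {f : X → ℝ} (hf : ContinuousOn f T) (hf0 : ∀ x ∈ T, f x ≠ 0)
    {a b : X} (ha : a ∈ T) (hb : b ∈ T) : 0 < f a ↔ 0 < f b := by
  have key : ∀ x ∈ T, ∀ y ∈ T, 0 < f x → 0 < f y := by
    intro x hx y hy hfx
    by_contra! hfy
    obtain ⟨z, hz, hz0⟩ := hT.intermediate_value hy hx hf ⟨hfy, hfx.le⟩
    exact hf0 z hz hz0
  exact ⟨key a ha b hb, key b hb a ha⟩

def orthant {E : Type*} (α : E → ℝ) : Set (E → ℝ) := {v | ∀ e, 0 ≤ α e * v e}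

section

variable {E : Type*} [Fintype E]

theorem dot_eq_dotProduct (x y : E → ℝ) : dot x y = x ⬝ᵥ y := rfl

def perpSubmodule (W : Submodule ℝ (E → ℝ)) : Submodule ℝ (E → ℝ) :=
  LinearMap.BilinForm.orthogonal (dotProductBilin ℝ ℝ) W

theorem mem_of_forall_mem_perp_dot_eq_zero {W : Submodule ℝ (E → ℝ)} {w : E → ℝ}
    (hw : ∀ p ∈ perp W, dot p w = 0) : w ∈ W := by
  let B : LinearMap.BilinForm ℝ (E → ℝ) := dotProductBilin ℝ ℝ
  have hB : B.Nondegenerate :=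
    ⟨fun x hx => dotProduct_self_eq_zero.mp (hx x), fun y hy => dotProduct_self_eq_zero.mp (hy y)⟩
  have hBrefl : B.IsRefl := fun x y hxy => by simpa [B, dotProduct_comm] using hxy
  rw [← LinearMap.BilinForm.orthogonal_orthogonal hB hBrefl W]
  exact hw

theorem exists_forall_eq_dot (f : (E → ℝ) →ₗ[ℝ] ℝ) : ∃ w : E → ℝ, ∀ x, f x = dot x w := by
  classical
  refine ⟨fun e => f (Pi.single e 1), fun x => ?_⟩
  have hsingle (e : E) : (fun j => if e = j then (1 : ℝ) else 0) = Pi.single e 1 := by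
    ext j; simp [Pi.single_apply, eq_comm]
  simp [LinearMap.pi_apply_eq_sum_univ f x, hsingle, dot]

theorem IsFeasible.dot_nonneg {W : Submodule ℝ (E → ℝ)} {h α γ : E → ℝ} (hf : IsFeasible W h α)
    (hα : ∀ e, α e ≠ 0) (hγW : γ ∈ W) (hγ : γ ∈ orthant α) : 0 ≤ dot h γ := by
  obtain ⟨v, hv, hvα⟩ := hf
  have hterm (e : E) : 0 ≤ v e * γ e := by
    have hprod : (α e * α e) * (v e * γ e) = (α e * v e) * (α e * γ e) := by ring
    exact nonneg_of_mul_nonneg_right (hprod ▸ mul_nonneg (hvα e) (hγ e)) (mul_self_pos.mpr (hα e))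
  have hperp : γ ⬝ᵥ (v - h) = 0 := hv γ hγW
  rw [dotProduct_sub, dotProduct_comm γ v, dotProduct_comm γ h, sub_eq_zero] at hperp
  rw [dot_eq_dotProduct, ← hperp]
  exact Finset.sum_nonneg fun e _ => hterm e

theorem exists_dot_separation_of_not_isFeasible {W : Submodule ℝ (E → ℝ)} {h α : E → ℝ}
    (hnf : ¬IsFeasible W h α) :
    ∃ (w : E → ℝ) (u : ℝ), (∀ v, (∀ e, 0 < α e * v e) → dot v w < u) ∧
      ∀ x, x - h ∈ perp W → u ≤ dot x w := by
  let s : Set (E → ℝ) := {v | ∀ e, 0 < α e * v e}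
  let t : Set (E → ℝ) := {x | x - h ∈ perpSubmodule W}
  have hs_open : IsOpen s := by
    simp only [s, Set.ofPred_forall]
    exact isOpen_iInter_of_finite fun e => isOpen_lt continuous_const (by fun_prop)
  have hs_conv : Convex ℝ s := by
    simp only [s, Set.ofPred_forall]
    exact convex_iInter fun e => convex_halfSpace_gt ⟨fun x y => by simp [mul_add],
      fun c x => by simp [mul_left_comm]⟩ 0
  have ht_conv : Convex ℝ t := by
    have : t = (fun x => -h + x) ⁻¹' perpSubmodule W := by ext x; simp [t, neg_add_eq_sub]
    exact this ▸ (perpSubmodule W).convex.translate_preimage_right (-h)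
  have hst : Disjoint s t :=
    Set.disjoint_left.mpr fun v hvs hvt => hnf ⟨v, hvt, fun e => (hvs e).le⟩
  obtain ⟨f, u, hfs, hft⟩ := geometric_hahn_banach_open hs_conv hs_open ht_conv hst
  obtain ⟨w, hfw⟩ : ∃ w, ∀ x, f x = dot x w := exists_forall_eq_dot f.toLinearMap
  exact ⟨w, u, fun v hv => hfw v ▸ hfs v hv, fun x hx => hfw x ▸ hft x hx⟩

theorem exists_mem_orthant_dot_nonpos_of_not_isFeasible {W : Submodule ℝ (E → ℝ)}
    {h α : E → ℝ} (hα : ∀ e, α e ≠ 0) (hnf : ¬IsFeasible W h α) :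
    ∃ w ∈ W, w ∈ orthant α ∧ w ≠ 0 ∧ dot h w ≤ 0 := by
  classical
  obtain ⟨w, u, hws, hwt⟩ := exists_dot_separation_of_not_isFeasible hnf
  -- `c • v + d • α` lies in the open orthant; letting `c → ∞` or `d → 0` gives the two bounds.
  have hopen (v : E → ℝ) (hv : v ∈ orthant α) (c d : ℝ) (hc : 0 ≤ c) (hd : 0 < d) :
      ∀ e, 0 < α e * (c • v + d • α) e := fun e => by
    have : α e * (c • v + d • α) e = c * (α e * v e) + d * (α e * α e) := by
      simp only [Pi.add_apply, Pi.smul_apply, smul_eq_mul]; ring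
    rw [this]
    exact add_pos_of_nonneg_of_pos (mul_nonneg hc (hv e)) (mul_pos hd (mul_self_pos.mpr (hα e)))
  have hu : 0 ≤ u := le_of_forall_pos_mul_add_lt (a := dot α w) (b := 0) fun d hd => by
    simpa [dot_eq_dotProduct] using hws _ (hopen 0 (fun e => by simp) 0 d le_rfl hd)
  have horthant (v : E → ℝ) (hv : v ∈ orthant α) : dot v w ≤ 0 :=
    nonpos_of_forall_pos_mul_add_lt (b := dot α w) fun c hc => by
      simpa [dot_eq_dotProduct] using hws _ (hopen v hv c 1 hc.le one_pos)
  have hperp (p : E → ℝ) (hp : p ∈ perp W) : dot p w = 0 :=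
    eq_zero_of_forall_le_add_mul (b := dot h w) fun c => by
      simpa [dot_eq_dotProduct] using hwt (h + c • p)
        (by rw [add_sub_cancel_left]; exact (perpSubmodule W).smul_mem c hp)
  have hh : u ≤ dot h w := hwt h (by rw [sub_self]; exact (perpSubmodule W).zero_mem)
  refine ⟨-w, W.neg_mem (mem_of_forall_mem_perp_dot_eq_zero hperp), fun e => ?_, ?_, ?_⟩
  · have := horthant (Pi.single e (α e)) fun e' => by
      rcases eq_or_ne e' e with rfl | he
      · simpa using mul_self_nonneg (α e')
      · simp [he]
    rw [dot_eq_dotProduct, single_dotProduct] at this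
    simpa using this
  · refine neg_ne_zero.mpr ?_
    rintro rfl
    have := hws α (by simpa using hopen 0 (fun e => by simp) 0 1 le_rfl one_pos)
    simp only [dot_eq_dotProduct, dotProduct_zero] at this hh
    linarith
  · simp only [dot_eq_dotProduct, dotProduct_neg] at hh ⊢
    linarith

theorem exists_sub_smul_mem_orthant {α w z : E → ℝ} (hw : w ∈ orthant α)
    (hzw : support z ⊂ support w) (hz : ∃ e, 0 < α e * z e) :
    ∃ c : ℝ, 0 < c ∧ w - c • z ∈ orthant α ∧ support (w - c • z) ⊂ support w ∧
      w - c • z ≠ 0 := by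
  classical
  let T := Finset.univ.filter fun e => 0 < α e * z e
  have hT : T.Nonempty := by simpa [T, Finset.filter_nonempty_iff] using hz
  let r (e : E) := α e * w e / (α e * z e)
  obtain ⟨e₀, he₀T, hmin⟩ := T.exists_min_image r hT
  have hz₀ : 0 < α e₀ * z e₀ := by simpa [T] using he₀T
  have hw₀ : 0 < α e₀ * w e₀ := by
    refine (hw e₀).lt_of_ne' (mul_ne_zero (left_ne_zero_of_mul hz₀.ne') (hzw.subset ?_))
    exact right_ne_zero_of_mul hz₀.ne'
  have hr : 0 < r e₀ := div_pos hw₀ hz₀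
  have hkill : (w - r e₀ • z) e₀ = 0 := by
    have hα₀ := left_ne_zero_of_mul hz₀.ne'
    have hze₀ := right_ne_zero_of_mul hz₀.ne'
    simp only [Pi.sub_apply, Pi.smul_apply, smul_eq_mul, r]
    field_simp
    ring
  have hsub : support (w - r e₀ • z) ⊆ support w := (support_sub _ _).trans
    (Set.union_subset subset_rfl ((support_smul_subset_right _ _).trans hzw.subset))
  refine ⟨r e₀, hr, fun e => ?_, ?_, ?_⟩
  · have hexp : α e * (w - r e₀ • z) e = α e * w e - r e₀ * (α e * z e) := by
      simp only [Pi.sub_apply, Pi.smul_apply, smul_eq_mul]; ring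
    rw [hexp, sub_nonneg]
    by_cases he : 0 < α e * z e
    · exact (le_div_iff₀ he).mp (hmin e (by simp [T, he]))
    · nlinarith [hw e, div_pos hw₀ hz₀]
  · exact (Set.ssubset_iff_of_subset hsub).mpr
      ⟨e₀, right_ne_zero_of_mul hw₀.ne', fun h => h hkill⟩
  · intro h0
    refine hzw.ne (Eq.symm ?_)
    rw [sub_eq_zero.mp h0, support_const_smul_of_ne_zero _ _ hr.ne']

theorem exists_mem_orthant_support_ssubset_dot_nonpos (W : Submodule ℝ (E → ℝ))
    {h α w z : E → ℝ} (hα : ∀ e, α e ≠ 0) (hwW : w ∈ W) (hw : w ∈ orthant α)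
    (hhw : dot h w ≤ 0) (hzW : z ∈ W) (hz0 : z ≠ 0) (hzw : support z ⊂ support w) :
    ∃ x ∈ W, x ∈ orthant α ∧ x ≠ 0 ∧ support x ⊂ support w ∧ dot h x ≤ 0 := by
  wlog hpos : ∃ e, 0 < α e * z e generalizing z
  · obtain ⟨e, he⟩ := support_nonempty_iff.mpr hz0
    refine this (W.neg_mem hzW) (neg_ne_zero.mpr hz0) (by rwa [support_neg]) ⟨e, ?_⟩
    have hne : α e * z e ≠ 0 := mul_ne_zero (hα e) he
    have hnpos : ¬0 < α e * z e := fun hlt => hpos ⟨e, hlt⟩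
    simp only [Pi.neg_apply, mul_neg, neg_pos]
    exact lt_of_le_of_ne (not_lt.mp hnpos) hne
  obtain ⟨c, hc, hxO, hxw, hx0⟩ := exists_sub_smul_mem_orthant hw hzw hpos
  have hxW : w - c • z ∈ W := W.sub_mem hwW (W.smul_mem c hzW)
  rcases le_or_gt (dot h (w - c • z)) 0 with hx | hx
  · exact ⟨_, hxW, hxO, hx0, hxw, hx⟩
  by_cases hneg : ∃ e, α e * z e < 0
  · -- `w` lies strictly between the two points where the line `w + ℝ z` leaves the orthant.
    obtain ⟨d, hd, hyO, hyw, hy0⟩ := exists_sub_smul_mem_orthant (z := -z) hw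
      (by rwa [support_neg]) (by simpa using hneg)
    refine ⟨_, W.sub_mem hwW (W.smul_mem d (W.neg_mem hzW)), hyO, hy0, hyw, ?_⟩
    have hsplit : (c + d) • w = d • (w - c • z) + c • (w - d • -z) := by module
    have := congrArg (h ⬝ᵥ ·) hsplit
    simp only [dotProduct_add, dotProduct_smul, smul_eq_mul, ← dot_eq_dotProduct] at this
    nlinarith
  · simp only [not_exists, not_lt] at hneg
    refine ⟨z, hzW, hneg, hz0, hzw, ?_⟩
    have hsplit : w = (w - c • z) + c • z := by module
    have := congrArg (h ⬝ᵥ ·) hsplit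
    simp only [dotProduct_add, dotProduct_smul, smul_eq_mul, ← dot_eq_dotProduct] at this
    nlinarith

theorem exists_isCircuit_mem_orthant_dot_nonpos (W : Submodule ℝ (E → ℝ)) {h α w : E → ℝ}
    (hα : ∀ e, α e ≠ 0) (hwW : w ∈ W) (hw : w ∈ orthant α) (hw0 : w ≠ 0) (hhw : dot h w ≤ 0) :
    ∃ γ, IsCircuit (W : Set (E → ℝ)) γ ∧ γ ∈ orthant α ∧ dot h γ ≤ 0 := by
  obtain ⟨γ, ⟨hγW, hγO, hγ0, hhγ⟩, hmin⟩ := (measure fun x : E → ℝ => (support x).ncard).wf.has_min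
    {x | x ∈ W ∧ x ∈ orthant α ∧ x ≠ 0 ∧ dot h x ≤ 0} ⟨w, hwW, hw, hw0, hhw⟩
  refine ⟨γ, ⟨hγW, hγ0, fun z hzW hz0 hzγ => ?_⟩, hγO, hhγ⟩
  by_contra hne
  obtain ⟨x, hxW, hxO, hx0, hxγ, hhx⟩ :=
    exists_mem_orthant_support_ssubset_dot_nonpos W hα hγW hγO hhγ hzW hz0 (hzγ.ssubset_of_ne hne)
  exact hmin x ⟨hxW, hxO, hx0, hhx⟩ (Set.ncard_lt_ncard hxγ)

theorem isFeasible_iff_forall_isCircuit_dot_pos {W : Submodule ℝ (E → ℝ)} {h α : E → ℝ}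
    (hα : ∀ e, α e ≠ 0) (hh : ∀ γ, IsCircuit (W : Set (E → ℝ)) γ → dot h γ ≠ 0) :
    IsFeasible W h α ↔ ∀ γ, IsCircuit (W : Set (E → ℝ)) γ → γ ∈ orthant α → 0 < dot h γ := by
  refine ⟨fun hf γ hγ hγO => (hf.dot_nonneg hα hγ.1 hγO).lt_of_ne' (hh γ hγ), fun hpos => ?_⟩
  by_contra hnf
  obtain ⟨w, hwW, hwO, hw0, hhw⟩ := exists_mem_orthant_dot_nonpos_of_not_isFeasible hα hnf
  obtain ⟨γ, hγ, hγO, hhγ⟩ := exists_isCircuit_mem_orthant_dot_nonpos W hα hwW hwO hw0 hhw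
  exact (hpos γ hγ hγO).not_ge hhγ

end

/-- The set of feasible chambers depends only on the Kähler chamber of the
parameter: if `h₀` and `h₁` lie in the same connected component of the
complement of the root hyperplanes `γᗮ` (for `γ` a circuit of `W`), then a sign
vector `α` is `h₀`-feasible iff it is `h₁`-feasible. -/
theorem feasible_depends_only_on_kahler_chamber {E : Type*} [Fintype E]
    (W : Submodule ℝ (E → ℝ)) (h₀ h₁ : E → ℝ)
    (hcc : h₁ ∈ connectedComponentIn
      {h : E → ℝ | ∀ γ : E → ℝ, IsCircuit (W : Set (E → ℝ)) γ → dot h γ ≠ 0} h₀) :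
    ∀ α : E → ℝ, (∀ e, α e = 1 ∨ α e = -1) →
      (IsFeasible W h₀ α ↔ IsFeasible W h₁ α) := by
  intro α hα
  set A := {h : E → ℝ | ∀ γ : E → ℝ, IsCircuit (W : Set (E → ℝ)) γ → dot h γ ≠ 0}
  have hα0 (e : E) : α e ≠ 0 := by rcases hα e with h | h <;> simp [h]
  have hA₀ := connectedComponentIn_nonempty_iff.mp ⟨h₁, hcc⟩
  rw [isFeasible_iff_forall_isCircuit_dot_pos hα0 hA₀,
    isFeasible_iff_forall_isCircuit_dot_pos hα0 (connectedComponentIn_subset _ _ hcc)]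
  refine forall_congr' fun γ => forall_congr' fun hγ => imp_congr_right fun _ => ?_
  have hcont : Continuous fun x : E → ℝ => dot x γ := by unfold dot; fun_prop
  exact isPreconnected_connectedComponentIn.pos_iff_of_ne_zero hcont.continuousOn
    (fun x hx => (connectedComponentIn_subset A h₀ hx : x ∈ A) γ hγ)
    (mem_connectedComponentIn hA₀) hcc
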